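/- arXiv:1908.06833 — 3 statements merged into one kernel-verified Lean document; each statement's English description precedes it below -/
import Mathlib

section
/- Let σ : 𝔽_q → 𝔽_q be a field automorphism. A map δ : 𝔽_q → 𝔽_q is a σ-derivation (i.e., additive and satisfying δ(ab) = σ(a)δ(b) + δ(a)b for all a,b) if and only if there exists λ ∈ 𝔽_q such that δ(a) = λ(a − σ(a)) for all a ∈ 𝔽_q. In particular, the only Id-derivation on 𝔽_q is δ = 0. -/
theorem aux_id_deriv (F : Type*) [Field F] [Fintype F] (δ : F → F)
    (hadd : ∀ a b : F, δ (a + b) = δ a + δ b)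
    (hmul : ∀ a b : F, δ (a * b) = a * δ b + δ a * b) : δ = 0 := by
  have hpow : ∀ (b : F) (n : ℕ), δ (b ^ (n + 1)) = (n + 1) * b ^ n * δ b := by
    intro b n
    induction n with
    | zero => simp
    | succ n ih =>
      have h : b ^ (n + 2) = b * b ^ (n + 1) := by ring
      rw [h, hmul, ih]; push_cast; ring
  funext a
  have hq : a ^ Fintype.card F = a := FiniteField.pow_card a
  obtain ⟨m, hm⟩ : ∃ m, Fintype.card F = m + 1 :=
    ⟨Fintype.card F - 1, (Nat.succ_pred_eq_of_pos Fintype.card_pos).symm⟩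
  have hcard : (Fintype.card F : F) = 0 := FiniteField.cast_card_eq_zero F
  have h2 := hpow a m
  rw [← hm, hq] at h2
  rw [hm] at hcard
  push_cast at hcard
  rw [hcard] at h2
  simpa using h2

theorem stmt_4 (F : Type*) [Field F] [Fintype F] (σ : F ≃+* F) (δ : F → F) :
    (((∀ a b : F, δ (a + b) = δ a + δ b) ∧
        (∀ a b : F, δ (a * b) = σ a * δ b + δ a * b)) ↔
      ∃ l : F, ∀ a : F, δ a = l * (a - σ a)) ∧
    ∀ δ' : F → F, (∀ a b : F, δ' (a + b) = δ' a + δ' b) →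
      (∀ a b : F, δ' (a * b) = a * δ' b + δ' a * b) → δ' = 0 := by
  constructor
  · constructor
    · rintro ⟨hadd, hmul⟩
      by_cases hσ : ∀ a, σ a = a
      · have h0 := aux_id_deriv F δ hadd (fun a b => by rw [hmul a b, hσ a])
        exact ⟨0, fun a => by simp [congrFun h0 a]⟩
      · push_neg at hσ
        obtain ⟨c, hc⟩ := hσ
        have hne : c - σ c ≠ 0 := sub_ne_zero.mpr (Ne.symm hc)
        refine ⟨δ c / (c - σ c), fun a => ?_⟩
        have key : σ a * δ c + δ a * c = σ c * δ a + δ c * a := by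
          rw [← hmul a c, ← hmul c a, mul_comm]
        field_simp
        linear_combination key
    · rintro ⟨l, hl⟩
      constructor
      · intro a b; simp [hl]; ring
      · intro a b; simp [hl]; ring
  · intro δ' hadd hmul
    exact aux_id_deriv F δ' hadd hmul
end

section
/- Let σ, τ : 𝔽_q → 𝔽_q^{n×n} be ring homomorphisms with σ(a)τ(b) = τ(b)σ(a) for all a,b ∈ 𝔽_q. Then a map δ : 𝔽_q → 𝔽_q^n is a (σ,τ)-derivation if and only if it is inner, i.e., there exists λ ∈ 𝔽_q^n with δ(a) = (τ(a) − σ(a))λ for all a ∈ 𝔽_q. Moreover, λ can be taken as (τ(c) − σ(c))^(q−2) δ(c) for a primitive element c of 𝔽_q^*. -/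
open Matrix Finset


lemma my_choose_cast (p : ℕ) (hp : p.Prime) : ∀ m : ℕ, m < p →
    (((p - 1).choose m : ZMod p)) = (-1) ^ m := by
  intro m
  induction m with
  | zero => simp
  | succ k ih =>
    intro hm
    have hk := ih (by omega)
    have pascal : (p - 1).choose k + (p - 1).choose (k + 1) = p.choose (k + 1) := by
      conv_rhs => rw [show p = (p - 1) + 1 by omega]
      rw [Nat.choose_succ_succ]
    have hdvd : p ∣ p.choose (k + 1) :=
      Nat.Prime.dvd_choose_self hp (by omega) hm
    have h0 : ((p.choose (k + 1) : ZMod p)) = 0 := by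
      rwa [ZMod.natCast_eq_zero_iff]
    have := congrArg (fun x : ℕ => (x : ZMod p)) pascal
    push_cast at this
    rw [h0] at this
    have : ((p - 1).choose (k + 1) : ZMod p) = -((p - 1).choose k : ZMod p) := by
      linear_combination this
    rw [this, hk]
    ring
lemma my_sub_pow_pred {R : Type*} [Ring R] (p : ℕ) (hp : p.Prime) [CharP R p]
    {x y : R} (h : Commute x y) :
    (x - y) ^ (p - 1) = ∑ i ∈ Finset.range p, x ^ i * y ^ (p - 1 - i) := by
  have hp1 : 1 ≤ p := hp.one_lt.le
  have hneg : Commute x (-y) := h.neg_right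
  have hbin := hneg.add_pow (p - 1)
  rw [← sub_eq_add_neg, show (p - 1) + 1 = p by omega] at hbin
  rw [hbin]
  refine Finset.sum_congr rfl fun i hi => ?_
  rw [Finset.mem_range] at hi
  rw [neg_pow]
  have key : ((-1 : R) ^ (p - 1 - i) * ((p - 1).choose i : R)) = 1 := by
    haveI : Fact p.Prime := ⟨hp⟩
    have hzmod : ((-1 : ZMod p) ^ (p - 1 - i) * ((p - 1).choose i : ZMod p)) = 1 := by
      rw [my_choose_cast p hp i hi, ← pow_add,
        show (p - 1 - i) + i = p - 1 by omega]
      have hch : (-1 : ZMod p) ^ p = -1 := neg_one_pow_char (ZMod p) p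
      have h2 : (-1 : ZMod p) ^ (p - 1) * (-1) = -1 := by
        rw [← pow_succ, show (p - 1) + 1 = p by omega, hch]
      linear_combination (-1 : ZMod p) * h2
    have hmap := congrArg (ZMod.castHom (dvd_refl p) R) hzmod
    simp only [_root_.map_mul, _root_.map_one, map_pow, map_neg, map_natCast] at hmap
    exact hmap
  have c1 : Commute ((-1 : R) ^ (p - 1 - i)) (y ^ (p - 1 - i)) :=
    ((Commute.neg_one_left y).pow_pow _ _)
  calc x ^ i * ((-1) ^ (p - 1 - i) * y ^ (p - 1 - i)) * ((p - 1).choose i : R)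
      = x ^ i * y ^ (p - 1 - i) * ((-1 : R) ^ (p - 1 - i) * ((p - 1).choose i : R)) := by
        rw [← mul_assoc, mul_assoc (x ^ i), c1.eq, ← mul_assoc, mul_assoc]
    _ = x ^ i * y ^ (p - 1 - i) := by rw [key, mul_one]

theorem stmt_7 (F : Type*) [Field F] [Fintype F] (n : ℕ)
    (σ τ : F →+* Matrix (Fin n) (Fin n) F)
    (hcomm : ∀ a b : F, σ a * τ b = τ b * σ a)
    (c : Fˣ) (hc : ∀ x : Fˣ, x ∈ Subgroup.zpowers c)
    (δ : F → Fin n → F) :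
    (((∀ a b : F, δ (a + b) = δ a + δ b) ∧
        (∀ a b : F, δ (a * b) = σ a *ᵥ δ b + τ b *ᵥ δ a)) ↔
      ∃ l : Fin n → F, ∀ a : F, δ a = (τ a - σ a) *ᵥ l) ∧
    ((∀ a b : F, δ (a + b) = δ a + δ b) →
      (∀ a b : F, δ (a * b) = σ a *ᵥ δ b + τ b *ᵥ δ a) →
      ∀ a : F, δ a =
        (τ a - σ a) *ᵥ
          ((τ (c : F) - σ (c : F)) ^ (Fintype.card F - 2) *ᵥ δ (c : F))) := by
  -- trivial case n = 0
  rcases Nat.eq_zero_or_pos n with hn | hn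
  · subst hn
    haveI : Subsingleton (Fin 0 → F) := ⟨fun f g => funext fun i => i.elim0⟩
    refine ⟨⟨fun _ => ⟨0, fun a => Subsingleton.elim _ _⟩,
      fun _ => ⟨fun a b => Subsingleton.elim _ _, fun a b => Subsingleton.elim _ _⟩⟩,
      fun _ _ a => Subsingleton.elim _ _⟩
  haveI : Nonempty (Fin n) := ⟨⟨0, hn⟩⟩
  -- the main (inner) construction, given the derivation laws
  have main : (∀ a b : F, δ (a + b) = δ a + δ b) →
      (∀ a b : F, δ (a * b) = σ a *ᵥ δ b + τ b *ᵥ δ a) →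
      ∀ a : F, δ a =
        (τ a - σ a) *ᵥ
          ((τ (c : F) - σ (c : F)) ^ (Fintype.card F - 2) *ᵥ δ (c : F)) := by
    intro hadd hmul
    have hq2 : 2 ≤ Fintype.card F := Fintype.one_lt_card
    -- characteristic
    obtain ⟨p, hpinst⟩ := CharP.exists F
    obtain ⟨m, hp, hcard⟩ := FiniteField.card F p
    haveI : Fact p.Prime := ⟨hp⟩
    haveI : CharP (Matrix (Fin n) (Fin n) F) p := inferInstance
    -- basic values
    have hδ1 : δ 1 = 0 := by
      have h := hmul 1 1
      rw [mul_one] at h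
      simp only [_root_.map_one, one_mulVec] at h
      exact (left_eq_add.mp h)
    -- power rule
    have hpow : ∀ (a : F) (k : ℕ),
        δ (a ^ k) = (∑ i ∈ Finset.range k, τ a ^ i * σ a ^ (k - 1 - i)) *ᵥ δ a := by
      intro a k
      induction k with
      | zero => simp [hδ1]
      | succ k ih =>
        have h1 : δ (a ^ (k + 1)) = σ a *ᵥ δ (a ^ k) + τ a ^ k *ᵥ δ a := by
          rw [pow_succ, mul_comm, hmul a (a ^ k), map_pow]
        have hmat : σ a * (∑ i ∈ Finset.range k, τ a ^ i * σ a ^ (k - 1 - i)) + τ a ^ k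
            = ∑ i ∈ Finset.range (k + 1), τ a ^ i * σ a ^ (k + 1 - 1 - i) := by
          rw [Finset.sum_range_succ, show k + 1 - 1 - k = 0 by omega, pow_zero, mul_one,
            Finset.mul_sum]
          congr 1
          refine Finset.sum_congr rfl fun i hi => ?_
          rw [Finset.mem_range] at hi
          have hC : Commute (σ a) (τ a) := hcomm a a
          have hcom : Commute (σ a) (τ a ^ i) := hC.pow_right i
          rw [← mul_assoc, hcom.eq, mul_assoc, ← pow_succ',
            show k - 1 - i + 1 = k + 1 - 1 - i by omega]
        rw [h1, ih, mulVec_mulVec, ← add_mulVec, hmat]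
    -- the binomial identity step
    have hstep : ∀ a : F, δ (a ^ p) = (τ a - σ a) ^ (p - 1) *ᵥ δ a := by
      intro a
      rw [hpow a p, my_sub_pow_pred p hp ((hcomm a a).symm : Commute (τ a) (σ a))]
    -- iterate the Frobenius step
    have hiter : ∀ (a : F) (j : ℕ), δ (a ^ p ^ j) = (τ a - σ a) ^ (p ^ j - 1) *ᵥ δ a := by
      intro a j
      induction j with
      | zero => simp
      | succ j ih =>
        have hpj : 1 ≤ p ^ j := Nat.one_le_pow _ _ hp.pos
        have hd : p ^ j * (p - 1) + p ^ j * 1 = p ^ j * p := by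
          rw [← Nat.mul_add]
          congr 1
          have := hp.two_le
          omega
        have heq : p ^ j * (p - 1) + (p ^ j - 1) = p ^ j * p - 1 := by omega
        rw [pow_succ, pow_mul, hstep (a ^ p ^ j), ih, mulVec_mulVec, map_pow, map_pow,
          ← sub_pow_char_pow_of_commute p j ((hcomm a a).symm : Commute (τ a) (σ a)),
          ← pow_mul, ← pow_add, heq]
    -- fixed point property
    have hfix : ∀ a : F, (τ a - σ a) ^ (Fintype.card F - 1) *ᵥ δ a = δ a := by
      intro a
      have h := hiter a m
      rw [← hcard, FiniteField.pow_card] at h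
      rw [← h]
    -- the candidate vector
    obtain ⟨l, hldef⟩ : ∃ l, l = (τ (c : F) - σ (c : F)) ^ (Fintype.card F - 2) *ᵥ δ (c : F) :=
      ⟨_, rfl⟩
    have hδc : δ (c : F) = (τ (c : F) - σ (c : F)) *ᵥ l := by
      rw [hldef, mulVec_mulVec, ← pow_succ',
        show Fintype.card F - 2 + 1 = Fintype.card F - 1 by omega]
      exact (hfix (c : F)).symm
    -- inner formula for powers of c
    have hunit : ∀ k : ℕ,
        δ ((c : F) ^ k) = (τ (c : F) ^ k - σ (c : F) ^ k) *ᵥ l := by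
      intro k
      induction k with
      | zero => simp [hδ1]
      | succ k ih =>
        have h1 : δ ((c : F) ^ (k + 1)) =
            σ (c : F) *ᵥ δ ((c : F) ^ k) + τ (c : F) ^ k *ᵥ δ (c : F) := by
          rw [pow_succ, mul_comm, hmul (c : F) ((c : F) ^ k), map_pow]
        rw [h1, ih, hδc]
        simp only [mulVec_mulVec]
        rw [← add_mulVec]
        congr 1
        have hC : Commute (σ (c : F)) (τ (c : F)) := hcomm (c : F) (c : F)
        have hcom : σ (c : F) * τ (c : F) ^ k = τ (c : F) ^ k * σ (c : F) :=
          (hC.pow_right k).eq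
        rw [mul_sub, mul_sub, hcom, ← pow_succ' (σ (c : F)) k, ← pow_succ (τ (c : F)) k]
        abel
    -- conclude for all a
    intro a
    rcases eq_or_ne a 0 with rfl | ha
    · have h0 : δ 0 = 0 := by
        have h := hadd 0 0
        rw [add_zero] at h
        exact (left_eq_add.mp h)
      rw [h0, map_zero, map_zero, sub_zero, zero_mulVec]
    · lift a to Fˣ using isUnit_iff_ne_zero.mpr ha with u
      obtain ⟨k, hk⟩ := (isOfFinOrder_of_finite c).mem_powers_iff_mem_zpowers.mpr (hc u)
      have hk' : (u : F) = (c : F) ^ k := by rw [← hk, Units.val_pow_eq_pow_val]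
      rw [hk', hunit k, map_pow, map_pow, hldef]
  constructor
  · constructor
    · rintro ⟨hadd, hmul⟩
      exact ⟨_, main hadd hmul⟩
    · rintro ⟨l, hl⟩
      constructor
      · intro a b
        rw [hl (a + b), hl a, hl b, _root_.map_add, _root_.map_add,
          show τ a + τ b - (σ a + σ b) = (τ a - σ a) + (τ b - σ b) by abel, add_mulVec]
      · intro a b
        rw [hl (a * b), hl a, hl b, _root_.map_mul, _root_.map_mul]
        simp only [mulVec_mulVec]
        rw [← add_mulVec]
        congr 1
        rw [mul_sub, mul_sub, hcomm a b,
          show τ b * τ a = τ a * τ b by rw [← _root_.map_mul, ← _root_.map_mul, mul_comm]]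
        abel
  · exact main
end

section
/- Every ring homomorphism σ : 𝔽_q → 𝔽_q^{n×n} is diagonalizable: there exist an invertible matrix A ∈ 𝔽_q^{n×n} and field automorphisms σ_1, …, σ_n of 𝔽_q such that σ(a) = A · diag(σ_1(a), …, σ_n(a)) · A^{−1} for all a ∈ 𝔽_q. -/
/-!
The unit group of `F` is cyclic, generated by some `g`. Since `σ g ^ q = σ g` and `X ^ q - X` is
the product of the distinct linear factors `X - c`, the matrix `σ g` is diagonalizable, say
`A⁻¹ (σ g) A` is diagonal. Every element of `F` is `0` or a power of `g`, so `A⁻¹ (σ a) A` is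
diagonal for every `a`, and its diagonal entries are ring endomorphisms of the finite field `F`,
hence automorphisms.
-/

open Polynomial Module

theorem Module.End.ker_aeval_prod_X_sub_C {K V : Type*} [Field K] [AddCommGroup V] [Module K V]
    (f : End K V) (s : Finset K) :
    LinearMap.ker (aeval f (∏ c ∈ s, (X - C c))) = ⨆ c ∈ s, f.eigenspace c := by
  classical
  induction s using Finset.induction_on with
  | empty => simp [End.one_eq_id]
  | @insert a s ha ih =>
    have hcop : IsCoprime (X - C a) (∏ c ∈ s, (X - C c)) :=
      IsCoprime.prod_right fun c hc =>
        pairwise_coprime_X_sub_C Function.injective_id fun h => ha (h ▸ hc)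
    rw [Finset.prod_insert ha, ← sup_ker_aeval_eq_ker_aeval_mul_of_coprime f hcop, ih,
      Finset.iSup_insert, End.eigenspace_def]
    simp [Module.algebraMap_end_eq_smul_id, End.one_eq_id]

theorem FiniteField.X_pow_card_sub_X_eq_prod (K : Type*) [Field K] [Fintype K] :
    (X ^ Fintype.card K - X : K[X]) = ∏ c, (X - C c) := by
  have hmonic : (X ^ Fintype.card K - X : K[X]).Monic :=
    monic_X_pow_sub (by rw [degree_X]; exact_mod_cast Fintype.one_lt_card)
  have hcard : (X ^ Fintype.card K - X : K[X]).roots.card =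
      (X ^ Fintype.card K - X : K[X]).natDegree := by
    rw [roots_X_pow_card_sub_X, X_pow_card_sub_X_natDegree_eq K Fintype.one_lt_card]; rfl
  rw [← prod_multiset_X_sub_C_of_monic_of_roots_card_eq hmonic hcard, roots_X_pow_card_sub_X]
  rfl

theorem Module.End.iSup_eigenspace_eq_top_of_pow_card_eq_self {K V : Type*} [Field K] [Fintype K]
    [AddCommGroup V] [Module K V] {f : End K V} (hf : f ^ Fintype.card K = f) :
    ⨆ μ, f.eigenspace μ = ⊤ := by
  have h := f.ker_aeval_prod_X_sub_C Finset.univ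
  rw [← FiniteField.X_pow_card_sub_X_eq_prod, map_sub, map_pow, aeval_X, hf, sub_self,
    LinearMap.ker_zero] at h
  simpa using h.symm

theorem Module.End.exists_basis_eigenvectors {K V n : Type*} [Field K] [AddCommGroup V]
    [Module K V] [Fintype n] (b₀ : Basis n K V) {f : End K V} (hf : ⨆ μ, f.eigenspace μ = ⊤) :
    ∃ (b : Basis n K V) (d : n → K), ∀ i, f (b i) = d i • b i := by
  classical
  have hInt : DirectSum.IsInternal f.eigenspace :=
    (DirectSum.isInternal_submodule_iff_iSupIndep_and_iSup_eq_top _).mpr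
      ⟨f.eigenspaces_iSupIndep, hf⟩
  let w : ∀ μ, Basis _ K (f.eigenspace μ) := fun μ => Basis.ofVectorSpace K _
  let e := (hInt.collectedBasis w).indexEquiv b₀
  refine ⟨(hInt.collectedBasis w).reindex e, fun i => (e.symm i).1, fun i => ?_⟩
  rw [Basis.reindex_apply]
  exact End.mem_eigenspace_iff.mp (hInt.collectedBasis_mem w (e.symm i))

theorem Matrix.exists_GL_eq_mul_diagonal_mul_inv_of_pow_card_eq_self {K n : Type*} [Field K]
    [Fintype K] [Fintype n] [DecidableEq n] {M : Matrix n n K} (hM : M ^ Fintype.card K = M) :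
    ∃ (A : GL n K) (d : n → K), M = A * Matrix.diagonal d * (A⁻¹ : GL n K) := by
  obtain ⟨b, d, hb⟩ := End.exists_basis_eigenvectors (Pi.basisFun K n)
    (End.iSup_eigenspace_eq_top_of_pow_card_eq_self (f := Matrix.toLinAlgEquiv' M)
      (by rw [← map_pow, hM]))
  replace hb : ∀ i, Matrix.toLin' M (b i) = d i • b i := hb
  set e := Pi.basisFun K n
  have hdiag : LinearMap.toMatrix b b (Matrix.toLin' M) = Matrix.diagonal d := by
    ext i j
    rw [LinearMap.toMatrix_apply, hb j, map_smul, b.repr_self, Finsupp.smul_apply,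
      Finsupp.single_apply, Matrix.diagonal_apply]
    aesop
  refine ⟨⟨e.toMatrix b, b.toMatrix e, e.toMatrix_mul_toMatrix_flip b,
    b.toMatrix_mul_toMatrix_flip e⟩, d, ?_⟩
  rw [← hdiag, Units.inv_mk, basis_toMatrix_mul_linearMap_toMatrix_mul_basis_toMatrix,
    LinearMap.toMatrix_eq_toMatrix', LinearMap.toMatrix'_toLin']

theorem Matrix.exists_ringHom_eq_diagonal {R S n : Type*} [NonAssocSemiring R] [Ring S]
    [Fintype n] [DecidableEq n] (τ : R →+* Matrix n n S)
    (h : ∀ a, τ a ∈ (Matrix.diagonalRingHom n S).range) :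
    ∃ φ : n → R →+* S, ∀ a, τ a = Matrix.diagonal fun i => φ i a := by
  let ψ : R →+* (n → S) :=
    ((RingEquiv.ofLeftInverse (f := Matrix.diagonalRingHom n S) Matrix.diag_diagonal).symm :
      _ →+* (n → S)).comp (τ.codRestrict _ h)
  refine ⟨fun i => (Pi.evalRingHom _ i).comp ψ, fun a => ?_⟩
  -- the inverse of `RingEquiv.ofLeftInverse` is the left inverse `Matrix.diag` itself
  change τ a = Matrix.diagonal (τ a).diag
  obtain ⟨d, hd⟩ := h a
  simp [← hd]

theorem Subring.eq_top_of_generator_mem {F : Type*} [Field F] [Finite F] {g : Fˣ}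
    (hg : ∀ x, x ∈ Subgroup.zpowers g) {S : Subring F} (hgS : (g : F) ∈ S) : S = ⊤ := by
  refine eq_top_iff.mpr fun a _ => ?_
  rcases eq_or_ne a 0 with rfl | ha
  · exact S.zero_mem
  obtain ⟨k, hk⟩ := mem_powers_iff_mem_zpowers.mpr (hg (Units.mk0 a ha))
  rw [← Units.val_mk0 ha, ← hk, Units.val_pow_eq_pow_val]
  exact S.pow_mem hgS k

theorem stmt_9 (F : Type*) [Field F] [Fintype F] (n : ℕ)
    (σ : F →+* Matrix (Fin n) (Fin n) F) :
    ∃ (A : GL (Fin n) F) (s : Fin n → (F ≃+* F)),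
      ∀ a : F, σ a = (A : Matrix (Fin n) (Fin n) F) *
        Matrix.diagonal (fun i => s i a) * ((A⁻¹ : GL (Fin n) F) : Matrix (Fin n) (Fin n) F) := by
  obtain ⟨g, hg⟩ := IsCyclic.exists_generator (α := Fˣ)
  obtain ⟨A, d, hA⟩ := Matrix.exists_GL_eq_mul_diagonal_mul_inv_of_pow_card_eq_self
    (M := σ g) (by rw [← map_pow, FiniteField.pow_card])
  let τ := (MulSemiringAction.toRingHom _ _ (ConjAct.toConjAct A)⁻¹).comp σ
  have hτg : τ g ∈ (Matrix.diagonalRingHom (Fin n) F).range :=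
    ⟨d, by simp [τ, ConjAct.units_smul_def, hA, mul_assoc]⟩
  have hτ : ∀ a, τ a ∈ (Matrix.diagonalRingHom (Fin n) F).range := fun a => by
    rw [← Subring.mem_comap,
      Subring.eq_top_of_generator_mem hg (S := (Matrix.diagonalRingHom (Fin n) F).range.comap τ)
        hτg]
    exact Subring.mem_top a
  obtain ⟨φ, hφ⟩ := Matrix.exists_ringHom_eq_diagonal τ hτ
  refine ⟨A, fun i => RingEquiv.ofBijective (φ i) (φ i).injective.bijective_of_finite,
    fun a => ?_⟩
  simp only [RingEquiv.ofBijective_apply, ← hφ a]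
  simp [τ, ConjAct.units_smul_def, mul_assoc]
end
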